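/- The bound of the two-line lemma is sharp: for every n ≥ 1 there exists a finite family 𝓑 of axis-parallel rectangles in ℝ², and two horizontal lines l₁, l₂ such that every rectangle meets at least one of them, with ν(𝓑) = n and τ(𝓑) = ⌊3n/2⌋. -/

import Mathlib

/-- A finite point set `S` pierces the family `F` if every member contains a point of `S`. -/
def Piercing {α : Type*} (S : Finset α) (F : Finset (Set α)) : Prop :=
  ∀ B ∈ F, ∃ p ∈ S, p ∈ B

/-- The piercing (transversal) number τ of a finite family of sets. -/
noncomputable def tau {α : Type*} (F : Finset (Set α)) : ℕ :=
  sInf {n | ∃ S : Finset α, S.card = n ∧ Piercing S F}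

/-- The independence number ν : the maximal number of pairwise disjoint members. -/
noncomputable def nu {α : Type*} (F : Finset (Set α)) : ℕ :=
  sSup {n | ∃ G ⊆ F, G.card = n ∧ (G : Set (Set α)).PairwiseDisjoint id}

/-- An axis-parallel box in ℝ^d : a product of d nonempty closed intervals. -/
def IsBox (d : ℕ) (B : Set (Fin d → ℝ)) : Prop :=
  ∃ l u : Fin d → ℝ, l ≤ u ∧ B = Set.Icc l u

/-- `f n d` : the supremum of τ over finite families of boxes in ℝ^d with ν ≤ n. -/
noncomputable def fBox (n d : ℕ) : ℕ :=
  sSup {t | ∃ F : Finset (Set (Fin d → ℝ)),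
    (∀ B ∈ F, IsBox d B) ∧ nu F ≤ n ∧ tau F = t}

/-!
Five rectangles whose intersection graph is a 5-cycle have ν = 2, and τ = 3 because a point lies
in at most two of them (`f i` and `f (i + 2)` are disjoint). Both ν and τ are additive over two
families of nonempty sets when every member of one is disjoint from every member of the other, so
⌊n/2⌋ translates of such a gadget in separate vertical strips, plus a unit square when n is odd,
give ν = n and τ = 3⌊n/2⌋ + n mod 2 = ⌊3n/2⌋; every rectangle touches `p 1 = 0` or `p 1 = 7`.
-/

open Finset

open Classical

section PiercingAndPacking

variable {α : Type*}

theorem tau_le_card {S : Finset α} {F : Finset (Set α)} (h : Piercing S F) : tau F ≤ S.card :=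
  Nat.sInf_le ⟨S, rfl, h⟩

theorem exists_piercing {F : Finset (Set α)} (hF : ∀ B ∈ F, B.Nonempty) :
    ∃ S : Finset α, Piercing S F :=
  ⟨F.attach.image fun B : F => (hF B.1 B.2).some, fun B hB =>
    ⟨_, mem_image_of_mem _ (mem_attach F ⟨B, hB⟩), (hF B hB).some_mem⟩⟩

theorem exists_piercing_card_eq_tau {F : Finset (Set α)} (hF : ∀ B ∈ F, B.Nonempty) :
    ∃ S : Finset α, Piercing S F ∧ S.card = tau F := by
  obtain ⟨S, hS⟩ := exists_piercing hF
  obtain ⟨T, hT, hTS⟩ := Nat.sInf_mem (s := {n | ∃ S : Finset α, S.card = n ∧ Piercing S F})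
    ⟨_, S, rfl, hS⟩
  exact ⟨T, hTS, hT⟩

theorem bddAbove_card_pairwiseDisjoint (F : Finset (Set α)) :
    BddAbove {n | ∃ G ⊆ F, G.card = n ∧ (G : Set (Set α)).PairwiseDisjoint id} :=
  ⟨F.card, by rintro _ ⟨G, hGF, rfl, -⟩; exact card_le_card hGF⟩

theorem card_le_nu {F G : Finset (Set α)} (hGF : G ⊆ F)
    (hG : (G : Set (Set α)).PairwiseDisjoint id) : G.card ≤ nu F :=
  le_csSup (bddAbove_card_pairwiseDisjoint F) ⟨G, hGF, rfl, hG⟩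

theorem exists_pairwiseDisjoint_card_eq_nu (F : Finset (Set α)) :
    ∃ G ⊆ F, G.card = nu F ∧ (G : Set (Set α)).PairwiseDisjoint id :=
  Nat.sSup_mem (s := {n | ∃ G ⊆ F, G.card = n ∧ (G : Set (Set α)).PairwiseDisjoint id})
    ⟨0, ∅, empty_subset F, rfl, by simp⟩ (bddAbove_card_pairwiseDisjoint F)

theorem nu_le_card (F : Finset (Set α)) : nu F ≤ F.card := by
  obtain ⟨G, hGF, hG, -⟩ := exists_pairwiseDisjoint_card_eq_nu F
  exact hG ▸ card_le_card hGF

@[simp]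
theorem nu_empty : nu (∅ : Finset (Set α)) = 0 :=
  Nat.eq_zero_of_le_zero (nu_le_card ∅)

@[simp]
theorem tau_empty : tau (∅ : Finset (Set α)) = 0 :=
  Nat.eq_zero_of_le_zero (tau_le_card (S := ∅) (by simp [Piercing]))

theorem nu_singleton (B : Set α) : nu {B} = 1 :=
  le_antisymm ((nu_le_card {B}).trans_eq (card_singleton B))
    (by simpa using card_le_nu (subset_refl {B}) (by simp))

theorem tau_singleton {B : Set α} (hB : B.Nonempty) : tau {B} = 1 := by
  obtain ⟨x, hx⟩ := hB
  refine le_antisymm (tau_le_card (S := {x}) (by simpa [Piercing])) ?_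
  obtain ⟨S, hS, hcard⟩ := exists_piercing_card_eq_tau (F := {B}) (by simpa using ⟨x, hx⟩)
  obtain ⟨p, hp, -⟩ := hS B (mem_singleton_self B)
  exact hcard ▸ card_pos.mpr ⟨p, hp⟩

variable {F G : Finset (Set α)}

theorem nu_union (hF : ∀ B ∈ F, B.Nonempty) (hFG : ∀ B ∈ F, ∀ C ∈ G, Disjoint B C) :
    nu (F ∪ G) = nu F + nu G := by
  apply le_antisymm
  · obtain ⟨H, hH, hcard, hdisj⟩ := exists_pairwiseDisjoint_card_eq_nu (F ∪ G)
    have hsplit : H = H ∩ F ∪ H ∩ G := by rw [← inter_union_distrib_left, inter_eq_left.mpr hH]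
    calc nu (F ∪ G) = H.card := hcard.symm
      _ = (H ∩ F ∪ H ∩ G).card := by rw [← hsplit]
      _ ≤ (H ∩ F).card + (H ∩ G).card := card_union_le _ _
      _ ≤ nu F + nu G := add_le_add
          (card_le_nu inter_subset_right (hdisj.subset (by simp)))
          (card_le_nu inter_subset_right (hdisj.subset (by simp)))
  · obtain ⟨H₁, hH₁, hcard₁, hdisj₁⟩ := exists_pairwiseDisjoint_card_eq_nu F
    obtain ⟨H₂, hH₂, hcard₂, hdisj₂⟩ := exists_pairwiseDisjoint_card_eq_nu G
    have hcross : ∀ B ∈ H₁, ∀ C ∈ H₂, Disjoint B C := fun B hB C hC => hFG B (hH₁ hB) C (hH₂ hC)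
    have hH : Disjoint H₁ H₂ := disjoint_left.mpr fun B hB₁ hB₂ =>
      (hF B (hH₁ hB₁)).ne_empty (disjoint_self.mp (hcross B hB₁ B hB₂))
    calc nu F + nu G = (H₁ ∪ H₂).card := by rw [card_union_of_disjoint hH, hcard₁, hcard₂]
      _ ≤ nu (F ∪ G) := card_le_nu (union_subset_union hH₁ hH₂) <| by
          rw [coe_union, Set.pairwiseDisjoint_union]
          exact ⟨hdisj₁, hdisj₂, fun B hB C hC _ => hcross B hB C hC⟩

theorem tau_union (hF : ∀ B ∈ F, B.Nonempty) (hG : ∀ B ∈ G, B.Nonempty)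
    (hFG : ∀ B ∈ F, ∀ C ∈ G, Disjoint B C) : tau (F ∪ G) = tau F + tau G := by
  apply le_antisymm
  · obtain ⟨S₁, hS₁, hcard₁⟩ := exists_piercing_card_eq_tau hF
    obtain ⟨S₂, hS₂, hcard₂⟩ := exists_piercing_card_eq_tau hG
    have hS : Piercing (S₁ ∪ S₂) (F ∪ G) := by
      intro B hB
      rcases mem_union.mp hB with hB | hB
      · obtain ⟨p, hp, hpB⟩ := hS₁ B hB; exact ⟨p, mem_union_left _ hp, hpB⟩
      · obtain ⟨p, hp, hpB⟩ := hS₂ B hB; exact ⟨p, mem_union_right _ hp, hpB⟩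
    exact (tau_le_card hS).trans (hcard₁ ▸ hcard₂ ▸ card_union_le S₁ S₂)
  · obtain ⟨S, hS, hcard⟩ := exists_piercing_card_eq_tau (F := F ∪ G)
      (fun B hB => (mem_union.mp hB).elim (hF B) (hG B))
    -- A point of `S` meets members of at most one of the two families.
    set S₁ := S.filter fun p => ∃ B ∈ F, p ∈ B
    set S₂ := S.filter fun p => ∃ C ∈ G, p ∈ C
    have hS₁ : Piercing S₁ F := fun B hB => by
      obtain ⟨p, hp, hpB⟩ := hS B (mem_union_left _ hB)
      exact ⟨p, mem_filter.mpr ⟨hp, B, hB, hpB⟩, hpB⟩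
    have hS₂ : Piercing S₂ G := fun C hC => by
      obtain ⟨p, hp, hpC⟩ := hS C (mem_union_right _ hC)
      exact ⟨p, mem_filter.mpr ⟨hp, C, hC, hpC⟩, hpC⟩
    have hdisj : Disjoint S₁ S₂ := disjoint_filter.mpr fun p _ ⟨B, hB, hpB⟩ ⟨C, hC, hpC⟩ =>
      Set.disjoint_left.mp (hFG B hB C hC) hpB hpC
    calc tau F + tau G ≤ S₁.card + S₂.card := add_le_add (tau_le_card hS₁) (tau_le_card hS₂)
      _ = (S₁ ∪ S₂).card := (card_union_of_disjoint hdisj).symm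
      _ ≤ S.card := card_le_card (union_subset (filter_subset _ _) (filter_subset _ _))
      _ = tau (F ∪ G) := hcard

end PiercingAndPacking

section FiveCycle

theorem Fin.card_le_two_of_add_notMem {d : Fin 5} (hd : d ≠ 0) {u : Finset (Fin 5)}
    (hu : ∀ i ∈ u, i + d ∉ u) : u.card ≤ 2 := by
  revert d u; decide

variable {α : Type*} {f : Fin 5 → Set α}
  (hadj : ∀ i, (f i ∩ f (i + 1)).Nonempty) (hdisj : ∀ i, Disjoint (f i) (f (i + 2)))
include hadj hdisj

theorem ne_succ_of_cycle (i : Fin 5) : f i ≠ f (i + 1) := by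
  intro h
  have h2 : i + 1 + 1 = i + 2 := by rw [add_assoc]; rfl
  exact Set.not_disjoint_iff_nonempty_inter.mpr (hadj (i + 1)) (h2 ▸ h ▸ hdisj i)

theorem nu_image_of_cycle : nu (univ.image f) = 2 := by
  apply le_antisymm
  · obtain ⟨G, hG, hcard, hGdisj⟩ := exists_pairwiseDisjoint_card_eq_nu (univ.image f)
    set u := univ.filter (f · ∈ G)
    have hGu : G ⊆ u.image f := fun B hB => by
      obtain ⟨i, -, rfl⟩ := mem_image.mp (hG hB)
      exact mem_image_of_mem f (mem_filter.mpr ⟨mem_univ i, hB⟩)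
    have hu : ∀ i ∈ u, i + 1 ∉ u := fun i hi hi' =>
      Set.not_disjoint_iff_nonempty_inter.mpr (hadj i)
        (hGdisj (mem_filter.mp hi).2 (mem_filter.mp hi').2 (ne_succ_of_cycle hadj hdisj i))
    calc nu (univ.image f) = G.card := hcard.symm
      _ ≤ u.card := (card_le_card hGu).trans card_image_le
      _ ≤ 2 := Fin.card_le_two_of_add_notMem one_ne_zero hu
  · have hne : f 0 ≠ f 2 := (hdisj 0).ne ((hadj 0).mono Set.inter_subset_left).ne_empty
    calc 2 = ({f 0, f 2} : Finset (Set α)).card := (card_pair hne).symm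
      _ ≤ nu (univ.image f) := card_le_nu (insert_subset (by simp) (by simp)) <| by
          rw [coe_pair]
          exact (Set.pairwiseDisjoint_singleton _ _).insert (by simpa using fun _ => hdisj 0)

theorem tau_image_of_cycle : tau (univ.image f) = 3 := by
  apply le_antisymm
  · choose p hp using hadj
    have hS : Piercing {p 0, p 2, p 3} (univ.image f) := by
      simp only [Piercing, mem_image, mem_univ, true_and, forall_exists_index,
        forall_apply_eq_imp_iff]
      intro i
      fin_cases i
      · exact ⟨p 0, by simp, (hp 0).1⟩
      · exact ⟨p 0, by simp, (hp 0).2⟩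
      · exact ⟨p 2, by simp, (hp 2).1⟩
      · exact ⟨p 2, by simp, (hp 2).2⟩
      · exact ⟨p 3, by simp, (hp 3).2⟩
    exact (tau_le_card hS).trans card_le_three
  · obtain ⟨S, hS, hcard⟩ := exists_piercing_card_eq_tau (F := univ.image f) (by
      simpa using fun i => (hadj i).mono Set.inter_subset_left)
    choose g hgS hgf using fun i => hS (f i) (mem_image_of_mem f (mem_univ i))
    have hfib : ∀ q ∈ univ.image g, (univ.filter (g · = q)).card ≤ 2 := fun q _ =>
      Fin.card_le_two_of_add_notMem (d := 2) (by decide) fun i hi hi' => by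
        rw [mem_filter] at hi hi'
        exact Set.disjoint_left.mp (hdisj i) (hi.2 ▸ hgf i) (hi'.2 ▸ hgf (i + 2))
    calc 3 ≤ (univ.image g).card := by
          have := card_le_mul_card_image univ 2 hfib
          simp only [card_univ, Fintype.card_fin] at this
          omega
      _ ≤ S.card := card_le_card (image_subset_iff.mpr fun i _ => hgS i)
      _ = tau (univ.image f) := hcard

end FiveCycle

section Construction

def rect (a b c d : ℝ) : Set (Fin 2 → ℝ) := Set.Icc ![a, c] ![b, d]

theorem mem_rect {a b c d : ℝ} {p : Fin 2 → ℝ} :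
    p ∈ rect a b c d ↔ (a ≤ p 0 ∧ p 0 ≤ b) ∧ c ≤ p 1 ∧ p 1 ≤ d := by
  simp only [rect, Set.mem_Icc, Pi.le_def, Fin.forall_fin_two, Matrix.cons_val_zero,
    Matrix.cons_val_one]
  tauto

theorem isBox_rect {a b c d : ℝ} (hab : a ≤ b) (hcd : c ≤ d) : IsBox 2 (rect a b c d) :=
  ⟨_, _, fun i => by fin_cases i <;> simpa, rfl⟩

theorem IsBox.nonempty {d : ℕ} {B : Set (Fin d → ℝ)} (h : IsBox d B) : B.Nonempty := by
  obtain ⟨l, u, hlu, rfl⟩ := h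
  exact Set.nonempty_Icc.mpr hlu

def gadget (x : ℝ) : Fin 5 → Set (Fin 2 → ℝ) :=
  ![rect x (x + 3) 6 7, rect (x + 3) (x + 4) 3 7, rect (x + 2) (x + 4) 0 3,
    rect x (x + 2) 0 1, rect x (x + 1) 1 7]

variable (x : ℝ)

theorem isBox_gadget (i : Fin 5) : IsBox 2 (gadget x i) := by
  fin_cases i <;> exact isBox_rect (by linarith) (by norm_num)

theorem gadget_inter_succ_nonempty (i : Fin 5) : (gadget x i ∩ gadget x (i + 1)).Nonempty := by
  fin_cases i
  · exact ⟨![x + 3, 6], by simp [gadget, mem_rect]; norm_num⟩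
  · exact ⟨![x + 3, 3], by simp [gadget, mem_rect]; norm_num⟩
  · exact ⟨![x + 2, 0], by simp [gadget, mem_rect]; norm_num⟩
  · exact ⟨![x, 1], by simp [gadget, mem_rect]⟩
  · exact ⟨![x, 6], by simp [gadget, mem_rect]; norm_num⟩

theorem disjoint_gadget_add_two (i : Fin 5) : Disjoint (gadget x i) (gadget x (i + 2)) := by
  rw [Set.disjoint_left]
  fin_cases i <;> simp [gadget, mem_rect] <;> intros <;> linarith

theorem exists_mem_gadget_line (i : Fin 5) : ∃ p ∈ gadget x i, p 1 = 0 ∨ p 1 = 7 := by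
  fin_cases i
  · exact ⟨![x, 7], by norm_num [gadget, mem_rect], by simp⟩
  · exact ⟨![x + 3, 7], by norm_num [gadget, mem_rect], by simp⟩
  · exact ⟨![x + 2, 0], by norm_num [gadget, mem_rect], by simp⟩
  · exact ⟨![x, 0], by norm_num [gadget, mem_rect], by simp⟩
  · exact ⟨![x, 7], by norm_num [gadget, mem_rect], by simp⟩

theorem mem_gadget_bounds {i : Fin 5} {p : Fin 2 → ℝ} (hp : p ∈ gadget x i) :
    x ≤ p 0 ∧ p 0 ≤ x + 4 := by
  fin_cases i <;> simp [gadget, mem_rect] at hp <;> constructor <;> linarith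

end Construction

noncomputable def family : ℕ → Finset (Set (Fin 2 → ℝ))
  | 0 => ∅
  | 1 => {rect 0 1 0 1}
  | n + 2 => univ.image (gadget (5 * n)) ∪ family n

theorem isBox_of_mem_family : ∀ {n : ℕ} {B : Set (Fin 2 → ℝ)}, B ∈ family n → IsBox 2 B
  | 0, _, hB => by simp [family] at hB
  | 1, _, hB => by
      rw [family, mem_singleton] at hB
      exact hB ▸ isBox_rect zero_le_one zero_le_one
  | n + 2, _, hB => by
      rw [family, mem_union, mem_image] at hB
      rcases hB with ⟨i, -, rfl⟩ | hB
      · exact isBox_gadget _ i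
      · exact isBox_of_mem_family hB

theorem exists_mem_line_of_mem_family :
    ∀ {n : ℕ} {B : Set (Fin 2 → ℝ)}, B ∈ family n → ∃ p ∈ B, p 1 = 0 ∨ p 1 = 7
  | 0, _, hB => by simp [family] at hB
  | 1, _, hB => by
      rw [family, mem_singleton] at hB
      exact ⟨0, hB ▸ by simp [mem_rect], Or.inl rfl⟩
  | n + 2, _, hB => by
      rw [family, mem_union, mem_image] at hB
      rcases hB with ⟨i, -, rfl⟩ | hB
      · exact exists_mem_gadget_line _ i
      · exact exists_mem_line_of_mem_family hB

theorem lt_of_mem_family :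
    ∀ {n : ℕ} {B : Set (Fin 2 → ℝ)}, B ∈ family n → ∀ p ∈ B, p 0 < 5 * n
  | 0, _, hB => by simp [family] at hB
  | 1, _, hB => fun p hp => by
      rw [family, mem_singleton] at hB
      have := (mem_rect.mp (hB ▸ hp)).1.2
      push_cast
      linarith
  | n + 2, _, hB => fun p hp => by
      rw [family, mem_union, mem_image] at hB
      push_cast
      rcases hB with ⟨i, -, rfl⟩ | hB
      · linarith [(mem_gadget_bounds _ hp).2]
      · linarith [lt_of_mem_family hB p hp]

theorem nonempty_of_mem_image_gadget (x : ℝ) : ∀ B ∈ univ.image (gadget x), B.Nonempty := by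
  simpa using fun i => (isBox_gadget x i).nonempty

theorem disjoint_gadget_family (n : ℕ) :
    ∀ B ∈ univ.image (gadget (5 * n)), ∀ C ∈ family n, Disjoint B C := by
  simp only [mem_image, mem_univ, true_and, forall_exists_index, forall_apply_eq_imp_iff]
  exact fun i C hC => Set.disjoint_left.mpr fun p hpB hpC =>
    (lt_of_mem_family hC p hpC).not_ge (mem_gadget_bounds _ hpB).1

theorem nu_family : ∀ n : ℕ, nu (family n) = n
  | 0 => nu_empty
  | 1 => nu_singleton _
  | n + 2 => by
      rw [family, nu_union (nonempty_of_mem_image_gadget _) (disjoint_gadget_family n),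
        nu_image_of_cycle (gadget_inter_succ_nonempty _) (disjoint_gadget_add_two _), nu_family n]
      omega

theorem tau_family : ∀ n : ℕ, tau (family n) = 3 * n / 2
  | 0 => tau_empty
  | 1 => tau_singleton (isBox_rect zero_le_one zero_le_one).nonempty
  | n + 2 => by
      rw [family, tau_union (nonempty_of_mem_image_gadget _)
          (fun _ hB => (isBox_of_mem_family hB).nonempty) (disjoint_gadget_family n),
        tau_image_of_cycle (gadget_inter_succ_nonempty _) (disjoint_gadget_add_two _),
        tau_family n]
      omega

theorem two_line_lemma_sharp_general (n : ℕ) :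
    ∃ (F : Finset (Set (Fin 2 → ℝ))) (c₁ c₂ : ℝ),
      (∀ B ∈ F, IsBox 2 B) ∧
      (∀ B ∈ F, ∃ p ∈ B, p 1 = c₁ ∨ p 1 = c₂) ∧
      nu F = n ∧ tau F = 3 * n / 2 :=
  ⟨family n, 0, 7, fun _ => isBox_of_mem_family, fun _ => exists_mem_line_of_mem_family,
    nu_family n, tau_family n⟩

/-- Sharpness of the two-line lemma: for every n ≥ 1 there is a family of
rectangles, each meeting one of two horizontal lines, with ν = n and
τ = ⌊3n/2⌋. -/
theorem two_line_lemma_sharp (n : ℕ) (hn : 1 ≤ n) :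
    ∃ (F : Finset (Set (Fin 2 → ℝ))) (c₁ c₂ : ℝ),
      (∀ B ∈ F, IsBox 2 B) ∧
      (∀ B ∈ F, ∃ p ∈ B, p 1 = c₁ ∨ p 1 = c₂) ∧
      nu F = n ∧ tau F = 3 * n / 2 :=
  two_line_lemma_sharp_general n
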